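/- Let L be a Lie type algebra and T a two-sided ideal of L. Then the centralizer C_L(T) = { x ∈ L : [x,T] = [T,x] = 0 } is a two-sided ideal of L. -/
import Mathlib


/-- The centralizer `C_L(T) = { x ∈ L : [x,T] = [T,x] = 0 }` of a subset `T`. -/
def centSub {K L : Type*} [Field K] [AddCommGroup L] [Module K L]
    (b : L →ₗ[K] L →ₗ[K] L) (T : Submodule K L) : Submodule K L where
  carrier := {x | ∀ t ∈ T, b x t = 0 ∧ b t x = 0}
  add_mem' := by
    intro x y hx hy t ht
    constructor
    · simp [map_add, LinearMap.add_apply, (hx t ht).1, (hy t ht).1]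
    · simp [map_add, (hx t ht).2, (hy t ht).2]
  zero_mem' := by intro t ht; simp
  smul_mem' := by
    intro c x hx t ht
    constructor
    · simp [map_smul, LinearMap.smul_apply, (hx t ht).1]
    · simp [map_smul, (hx t ht).2]

/-- Let `L` be a Lie type algebra and `T` a two-sided ideal of `L`.
Then the centralizer `C_L(T)` is a two-sided ideal of `L`. -/
theorem stmt13 {K L : Type*} [Field K] [AddCommGroup L] [Module K L]
    (b : L →ₗ[K] L →ₗ[K] L)
    (hLT : ∀ x y z : L, ∃ α β : K, α ≠ 0 ∧
      b (b x y) z = α • b x (b y z) + β • b (b x z) y)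
    (T : Submodule K L)
    (hT : Submodule.map₂ b T ⊤ ≤ T ∧ Submodule.map₂ b ⊤ T ≤ T) :
    Submodule.map₂ b (centSub b T) ⊤ ≤ centSub b T ∧
      Submodule.map₂ b ⊤ (centSub b T) ≤ centSub b T := by
  obtain ⟨hT1, hT2⟩ := hT
  constructor
  · rw [Submodule.map₂_le]
    intro c hc y _ t ht
    have hyt : b y t ∈ T := hT2 (Submodule.apply_mem_map₂ b (Submodule.mem_top) ht)
    have hty : b t y ∈ T := hT1 (Submodule.apply_mem_map₂ b ht (Submodule.mem_top))
    constructor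
    · obtain ⟨α, β, hα, h⟩ := hLT c y t
      rw [h, (hc _ hyt).1, (hc t ht).1]
      simp
    · obtain ⟨α, β, hα, h⟩ := hLT t c y
      rw [(hc t ht).2, (hc _ hty).2] at h
      simp only [map_zero, LinearMap.zero_apply, smul_zero, add_zero] at h
      exact (smul_eq_zero.mp h.symm).resolve_left hα
  · rw [Submodule.map₂_le]
    intro y _ c hc t ht
    have hyt : b y t ∈ T := hT2 (Submodule.apply_mem_map₂ b (Submodule.mem_top) ht)
    have hty : b t y ∈ T := hT1 (Submodule.apply_mem_map₂ b ht (Submodule.mem_top))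
    constructor
    · obtain ⟨α, β, hα, h⟩ := hLT y c t
      rw [h, (hc t ht).1, (hc _ hyt).2]
      simp
    · obtain ⟨α, β, hα, h⟩ := hLT t y c
      rw [(hc _ hty).2, (hc t ht).2] at h
      simp only [map_zero, LinearMap.zero_apply, smul_zero, add_zero] at h
      exact (smul_eq_zero.mp h.symm).resolve_left hα
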